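/- arXiv:2506.13862 — 8 statements merged into one kernel-verified Lean document; each statement's English description precedes it below -/
import Mathlib

section
/- For probability distributions p and p' on a finite set A with p(a) > 0 and p'(a) > 0 for all a, if p ∝ exp(ξ) and p' ∝ exp(ξ') (softmax distributions), then KL(p; p') ≤ (p - p') · (ξ - ξ'), where · denotes the dot product over A. -/
open Finset Real

/-- KL between softmax distributions is bounded by the dot product
`(p - p') · (ξ - ξ')`. -/
theorem softmax_kl_le_dot {A : Type*} [Fintype A] [Nonempty A]
    (ξ ξ' : A → ℝ) (p p' : A → ℝ)
    (hp : ∀ a, p a = Real.exp (ξ a) / ∑ a', Real.exp (ξ a'))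
    (hp' : ∀ a, p' a = Real.exp (ξ' a) / ∑ a', Real.exp (ξ' a')) :
    ∑ a, p a * (Real.log (p a) - Real.log (p' a)) ≤
      ∑ a, (p a - p' a) * (ξ a - ξ' a) := by
  set Z : ℝ := ∑ a', Real.exp (ξ a') with hZdef
  set Z' : ℝ := ∑ a', Real.exp (ξ' a') with hZ'def
  have hZ : 0 < Z := Finset.sum_pos (fun a _ => Real.exp_pos _) Finset.univ_nonempty
  have hZ' : 0 < Z' := Finset.sum_pos (fun a _ => Real.exp_pos _) Finset.univ_nonempty
  have hppos : ∀ a, 0 < p a := fun a => by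
    rw [hp]; exact div_pos (Real.exp_pos _) hZ
  have hp'pos : ∀ a, 0 < p' a := fun a => by
    rw [hp']; exact div_pos (Real.exp_pos _) hZ'
  have hlogp : ∀ a, Real.log (p a) = ξ a - Real.log Z := fun a => by
    rw [hp, Real.log_div (Real.exp_pos _).ne' hZ.ne', Real.log_exp]
  have hlogp' : ∀ a, Real.log (p' a) = ξ' a - Real.log Z' := fun a => by
    rw [hp', Real.log_div (Real.exp_pos _).ne' hZ'.ne', Real.log_exp]
  have hsum1 : ∑ a, p a = 1 := by
    simp only [hp]
    rw [← Finset.sum_div, div_self hZ.ne']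
  have hsum1' : ∑ a, p' a = 1 := by
    simp only [hp']
    rw [← Finset.sum_div, div_self hZ'.ne']
  -- rewrite RHS using logs
  have key : ∑ a, (p a - p' a) * (ξ a - ξ' a)
      = ∑ a, (p a - p' a) * (Real.log (p a) - Real.log (p' a)) := by
    have h1 : ∀ a ∈ Finset.univ, (p a - p' a) * (ξ a - ξ' a)
        = (p a - p' a) * (Real.log (p a) - Real.log (p' a))
          + (p a - p' a) * (Real.log Z - Real.log Z') := by
      intro a _
      rw [hlogp, hlogp']; ring
    rw [Finset.sum_congr rfl h1, Finset.sum_add_distrib, ← Finset.sum_mul,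
      Finset.sum_sub_distrib, hsum1, hsum1']
    ring
  rw [key]
  -- now reduce to Gibbs
  rw [← sub_nonneg, ← Finset.sum_sub_distrib]
  have h2 : ∀ a ∈ Finset.univ, (p a - p' a) * (Real.log (p a) - Real.log (p' a))
      - p a * (Real.log (p a) - Real.log (p' a))
      = p' a * (Real.log (p' a) - Real.log (p a)) := by
    intro a _; ring
  rw [Finset.sum_congr rfl h2]
  have h3 : ∀ a ∈ Finset.univ, p' a - p a ≤ p' a * (Real.log (p' a) - Real.log (p a)) := by
    intro a _
    have hx : Real.log (p a / p' a) ≤ p a / p' a - 1 :=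
      Real.log_le_sub_one_of_pos (div_pos (hppos a) (hp'pos a))
    rw [Real.log_div (hppos a).ne' (hp'pos a).ne'] at hx
    have := mul_le_mul_of_nonneg_left hx (hp'pos a).le
    have h4 : p' a * (p a / p' a - 1) = p a - p' a := by
      rw [mul_sub, mul_one, mul_div_cancel₀ _ (hp'pos a).ne']
    rw [h4] at this
    nlinarith [this]
  have := Finset.sum_le_sum h3
  rw [Finset.sum_sub_distrib, hsum1, hsum1'] at this
  linarith
end

section
/- For softmax distributions p ∝ exp(ξ) and p' ∝ exp(ξ') on a finite set A, the L1 distance satisfies ‖p - p'‖₁ ≤ ‖ξ - ξ'‖_∞. -/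
open Finset Real

-- key scalar inequality: log t ≥ 2(t-1)/(t+1) for t ≥ 1
lemma aux_log_ge {t : ℝ} (ht : 1 ≤ t) : 2 * (t - 1) / (t + 1) ≤ Real.log t := by
  have h0 : ∀ x ∈ Set.Ici (1:ℝ), 0 < x := fun x hx => lt_of_lt_of_le one_pos hx
  set F : ℝ → ℝ := fun s => Real.log s - 2 * (s - 1) / (s + 1) with hF
  have hderiv : ∀ x ∈ Set.Ici (1:ℝ),
      HasDerivAt F (x⁻¹ - 4 / (x + 1) ^ 2) x := by
    intro x hx
    have hx0 : (0:ℝ) < x := h0 x hx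
    have hx1 : x + 1 ≠ 0 := by positivity
    have h1 : HasDerivAt Real.log x⁻¹ x := Real.hasDerivAt_log hx0.ne'
    have h2 : HasDerivAt (fun s : ℝ => 2 * (s - 1)) 2 x := by
      simpa using ((hasDerivAt_id x).sub_const 1).const_mul 2
    have h3 : HasDerivAt (fun s : ℝ => s + 1) 1 x := (hasDerivAt_id x).add_const 1
    have h4 : HasDerivAt (fun s : ℝ => 2 * (s - 1) / (s + 1))
        ((2 * (x + 1) - 2 * (x - 1) * 1) / (x + 1) ^ 2) x := h2.div h3 hx1
    have : (2 * (x + 1) - 2 * (x - 1) * 1) / (x + 1) ^ 2 = 4 / (x + 1) ^ 2 := by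
      ring_nf
    rw [this] at h4
    exact h1.sub h4
  have hmono : MonotoneOn F (Set.Ici (1:ℝ)) := by
    apply monotoneOn_of_deriv_nonneg (convex_Ici 1)
    · exact continuousOn_of_forall_continuousAt fun x hx => (hderiv x hx).continuousAt
    · intro x hx
      rw [interior_Ici] at hx
      exact (hderiv x (show (1:ℝ) ≤ x from le_of_lt hx)).differentiableAt.differentiableWithinAt
    · intro x hx
      rw [interior_Ici] at hx
      rw [(hderiv x (show (1:ℝ) ≤ x from le_of_lt hx)).deriv]
      have hx0 : (0:ℝ) < x := lt_trans one_pos hx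
      have h4 : 4 * x ≤ (x + 1) ^ 2 := by nlinarith [sq_nonneg (x - 1)]
      have : 4 / (x + 1) ^ 2 ≤ x⁻¹ := by
        rw [div_le_iff₀ (by positivity), inv_mul_eq_div, le_div_iff₀ hx0]
        linarith
      linarith
  have h1 : F 1 ≤ F t := hmono (Set.self_mem_Ici) ht ht
  have : F 1 = 0 := by simp [hF]
  rw [this] at h1
  simpa [hF, sub_nonneg] using h1

lemma aux_pointwise {x y : ℝ} (hx : 0 < x) (hy : 0 < y) :
    2 * (x - y) ^ 2 / (x + y) ≤ (x - y) * (Real.log x - Real.log y) := by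
  wlog h : y ≤ x with H
  · have := H hy hx (le_of_not_ge h)
    have e1 : (y - x) ^ 2 = (x - y) ^ 2 := by ring
    have e2 : y + x = x + y := by ring
    have e3 : (y - x) * (Real.log y - Real.log x) = (x - y) * (Real.log x - Real.log y) := by ring
    rwa [e1, e2, e3] at this
  have ht : 1 ≤ x / y := (one_le_div hy).2 h
  have hkey := aux_log_ge ht
  rw [Real.log_div hx.ne' hy.ne'] at hkey
  have he : 2 * (x / y - 1) / (x / y + 1) = 2 * (x - y) / (x + y) := by
    rw [div_eq_div_iff (by positivity) (by positivity)]
    field_simp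
  rw [he] at hkey
  have hxy : 0 ≤ x - y := sub_nonneg.2 h
  calc 2 * (x - y) ^ 2 / (x + y) = (x - y) * (2 * (x - y) / (x + y)) := by ring
    _ ≤ (x - y) * (Real.log x - Real.log y) := by
        exact mul_le_mul_of_nonneg_left hkey hxy

/-- L1 distance between softmax distributions is bounded by the sup norm of
the difference of the logits. -/
theorem softmax_l1_le_sup {A : Type*} [Fintype A] [Nonempty A]
    (ξ ξ' : A → ℝ) (p p' : A → ℝ)
    (hp : ∀ a, p a = Real.exp (ξ a) / ∑ a', Real.exp (ξ a'))
    (hp' : ∀ a, p' a = Real.exp (ξ' a) / ∑ a', Real.exp (ξ' a')) :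
    ∑ a, |p a - p' a| ≤
      Finset.univ.sup' Finset.univ_nonempty (fun a => |ξ a - ξ' a|) := by
  set Z : ℝ := ∑ a', Real.exp (ξ a') with hZdef
  set Z' : ℝ := ∑ a', Real.exp (ξ' a') with hZ'def
  have hZ : 0 < Z := Finset.sum_pos (fun a _ => Real.exp_pos _) Finset.univ_nonempty
  have hZ' : 0 < Z' := Finset.sum_pos (fun a _ => Real.exp_pos _) Finset.univ_nonempty
  have hppos : ∀ a, 0 < p a := fun a => by rw [hp a]; positivity
  have hp'pos : ∀ a, 0 < p' a := fun a => by rw [hp' a]; positivity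
  have hpsum : ∑ a, p a = 1 := by
    simp_rw [hp]
    rw [← Finset.sum_div, div_self hZ.ne']
  have hp'sum : ∑ a, p' a = 1 := by
    simp_rw [hp']
    rw [← Finset.sum_div, div_self hZ'.ne']
  set L : ℝ := ∑ a, |p a - p' a| with hLdef
  set M : ℝ := Finset.univ.sup' Finset.univ_nonempty (fun a => |ξ a - ξ' a|) with hMdef
  have hM0 : 0 ≤ M := by
    obtain ⟨a⟩ := ‹Nonempty A›
    exact le_trans (abs_nonneg (ξ a - ξ' a)) (Finset.le_sup' (fun a => |ξ a - ξ' a|) (Finset.mem_univ a))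
  have hL0 : 0 ≤ L := Finset.sum_nonneg fun a _ => abs_nonneg _
  -- Cauchy-Schwarz (Sedrakyan)
  have hw : ∀ a ∈ (Finset.univ : Finset A), 0 < p a + p' a :=
    fun a _ => add_pos (hppos a) (hp'pos a)
  have hCS := Finset.sq_sum_div_le_sum_sq_div Finset.univ (fun a => |p a - p' a|) hw
  have hwsum : ∑ a, (p a + p' a) = 2 := by
    rw [Finset.sum_add_distrib, hpsum, hp'sum]; norm_num
  rw [hwsum] at hCS
  -- pointwise bound summed
  have hpw : ∑ a, |p a - p' a| ^ 2 / (p a + p' a)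
      ≤ (∑ a, (p a - p' a) * (Real.log (p a) - Real.log (p' a))) / 2 := by
    rw [Finset.sum_div]
    apply Finset.sum_le_sum
    intro a _
    rw [le_div_iff₀ (by norm_num : (0:ℝ) < 2)]
    calc |p a - p' a| ^ 2 / (p a + p' a) * 2
        = 2 * (p a - p' a) ^ 2 / (p a + p' a) := by rw [sq_abs]; ring
      _ ≤ _ := aux_pointwise (hppos a) (hp'pos a)
  -- log p = ξ - log Z
  have hlog : ∀ a, Real.log (p a) - Real.log (p' a)
      = (ξ a - ξ' a) - (Real.log Z - Real.log Z') := by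
    intro a
    rw [hp a, hp' a, Real.log_div (Real.exp_pos _).ne' hZ.ne',
      Real.log_div (Real.exp_pos _).ne' hZ'.ne', Real.log_exp, Real.log_exp]
    ring
  have hsymkl : ∑ a, (p a - p' a) * (Real.log (p a) - Real.log (p' a))
      = ∑ a, (p a - p' a) * (ξ a - ξ' a) := by
    have hz : ∑ a, (p a - p' a) * (Real.log Z - Real.log Z') = 0 := by
      rw [← Finset.sum_mul, Finset.sum_sub_distrib, hpsum, hp'sum]
      ring
    calc ∑ a, (p a - p' a) * (Real.log (p a) - Real.log (p' a))
        = ∑ a, ((p a - p' a) * (ξ a - ξ' a) - (p a - p' a) * (Real.log Z - Real.log Z')) := by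
          apply Finset.sum_congr rfl
          intro a _
          rw [hlog a]
          ring
      _ = ∑ a, (p a - p' a) * (ξ a - ξ' a) - ∑ a, (p a - p' a) * (Real.log Z - Real.log Z') :=
          Finset.sum_sub_distrib _ _
      _ = ∑ a, (p a - p' a) * (ξ a - ξ' a) := by rw [hz, sub_zero]
  have hfin : ∑ a, (p a - p' a) * (ξ a - ξ' a) ≤ L * M := by
    rw [hLdef, Finset.sum_mul]
    apply Finset.sum_le_sum
    intro a _
    calc (p a - p' a) * (ξ a - ξ' a) ≤ |(p a - p' a) * (ξ a - ξ' a)| := le_abs_self _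
      _ = |p a - p' a| * |ξ a - ξ' a| := abs_mul _ _
      _ ≤ |p a - p' a| * M := by
          apply mul_le_mul_of_nonneg_left _ (abs_nonneg _)
          exact Finset.le_sup' (fun a => |ξ a - ξ' a|) (Finset.mem_univ a)
  -- combine
  have hchain : L ^ 2 / 2 ≤ L * M / 2 := by
    calc L ^ 2 / 2 ≤ ∑ a, |p a - p' a| ^ 2 / (p a + p' a) := hCS
      _ ≤ (∑ a, (p a - p' a) * (Real.log (p a) - Real.log (p' a))) / 2 := hpw
      _ = (∑ a, (p a - p' a) * (ξ a - ξ' a)) / 2 := by rw [hsymkl]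
      _ ≤ L * M / 2 := by linarith
  have hLM : L ^ 2 ≤ L * M := by linarith
  rcases eq_or_lt_of_le hL0 with h0 | h0
  · rw [← h0]; exact hM0
  · have := mul_le_mul_of_nonneg_left hLM (le_of_lt (inv_pos.2 h0))
    nlinarith
end

section
/- Let β ∈ (0,1), α > 0, and M a positive integer with β^M ≠ 1. Let (Q_i)_{i ≥ 0} be a sequence in a real vector space with the convention Q_j = 0 for j < 0. Define ξ_0 = 0 and ξ_{k+1} = β ξ_k + α Q_k + (α β^M / (1 - β^M)) (Q_k - Q_{k-M}). Then for all k ≥ 0, ξ_{k+1} = (α / (1 - β^M)) Σ_{i=0}^{M-1} β^i Q_{k-i}. -/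
open Finset

/-- Closed form of the weight-corrected finite-memory EPMD logits recursion. -/
theorem weight_corrected_finite_memory_logits {V : Type*} [AddCommGroup V] [Module ℝ V]
    (α β : ℝ) (hβ : 0 < β ∧ β < 1) (hα : 0 < α)
    (M : ℕ) (hM : 0 < M) (hβM : β ^ M ≠ 1)
    (Q : ℤ → V) (hQneg : ∀ j : ℤ, j < 0 → Q j = 0)
    (ξ : ℕ → V) (hξ0 : ξ 0 = 0)
    (hrec : ∀ k : ℕ,
      ξ (k + 1) = β • ξ k + α • Q k
        + (α * β ^ M / (1 - β ^ M)) • (Q k - Q ((k : ℤ) - M))) :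
    ∀ k : ℕ,
      ξ (k + 1) = (α / (1 - β ^ M)) • ∑ i ∈ Finset.range M, (β ^ i) • Q ((k : ℤ) - i) := by
  have h1 : (1 : ℝ) - β ^ M ≠ 0 := sub_ne_zero.mpr (Ne.symm hβM)
  intro k
  induction k with
  | zero =>
    have hQM : Q ((0 : ℤ) - M) = 0 := by
      apply hQneg
      have : (0 : ℤ) < M := by exact_mod_cast hM
      omega
    have hsum : ∑ i ∈ Finset.range M, (β ^ i) • Q ((0 : ℤ) - i) = Q 0 := by
      rw [Finset.sum_eq_single 0]
      · simp
      · intro i hi hne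
        rw [hQneg ((0 : ℤ) - i) (by omega), smul_zero]
      · intro h; exact absurd (Finset.mem_range.mpr hM) h
    rw [hrec 0, hξ0]
    simp only [Nat.cast_zero]
    rw [hsum, hQM]
    match_scalars
    field_simp
    ring
  | succ k ih =>
    rw [hrec (k + 1), ih]
    set S1 := ∑ i ∈ Finset.range M, (β ^ i) • Q ((k : ℤ) - i) with hS1
    set S2 := ∑ i ∈ Finset.range M, (β ^ i) • Q (((k : ℕ) + 1 : ℕ) - i : ℤ) with hS2
    have hkey : β • S1 = S2 + (β ^ M) • Q (((k : ℕ) + 1 : ℕ) - M : ℤ) - Q ((k : ℕ) + 1 : ℕ) := by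
      have hT1 : ∑ i ∈ Finset.range (M + 1), (β ^ i) • Q (((k : ℕ) + 1 : ℕ) - i : ℤ)
          = S2 + (β ^ M) • Q (((k : ℕ) + 1 : ℕ) - M : ℤ) := Finset.sum_range_succ _ M
      have hT2 : ∑ i ∈ Finset.range (M + 1), (β ^ i) • Q (((k : ℕ) + 1 : ℕ) - i : ℤ)
          = (∑ i ∈ Finset.range M, (β ^ (i + 1)) • Q (((k : ℕ) + 1 : ℕ) - (i + 1) : ℤ))
            + Q ((k : ℕ) + 1 : ℕ) := by
        rw [Finset.sum_range_succ' (fun i => (β ^ i) • Q (((k : ℕ) + 1 : ℕ) - i : ℤ)) M]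
        simp
      have hβS : β • S1
          = ∑ i ∈ Finset.range M, (β ^ (i + 1)) • Q (((k : ℕ) + 1 : ℕ) - (i + 1) : ℤ) := by
        rw [hS1, Finset.smul_sum]
        refine Finset.sum_congr rfl fun i _ => ?_
        rw [smul_smul, ← pow_succ']
        congr 2
        push_cast
        ring
      rw [hβS, ← hT1, hT2]
      abel
    rw [smul_comm β, hkey]
    match_scalars <;> field_simp <;> ring
end

section
/- Let γ ∈ (0,1), β ∈ (0,1), and M a positive integer. Define c₁ = β^M/(1-β^M), c₂ = ((1+γ)/(1-γ) - β) c₁, d₁ = β + γ(1-β)/(1-β^M) + γ c₂, and d₂ = 2 c₁ γ²/(1-γ). Then d₁ + d₂ < 1 if and only if β^M < (1-γ)²(1-β) / (γ²(3+β) + 1 - β). -/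
/-- The convergence condition `d₁ + d₂ < 1` is equivalent to the explicit
threshold on `β^M`. -/
theorem d1_add_d2_lt_one_iff (γ β : ℝ) (hγ : 0 < γ ∧ γ < 1) (hβ : 0 < β ∧ β < 1)
    (M : ℕ) (hM : 0 < M) :
    ((β + γ * (1 - β) / (1 - β ^ M)
        + γ * (((1 + γ) / (1 - γ) - β) * (β ^ M / (1 - β ^ M))))
      + 2 * (β ^ M / (1 - β ^ M)) * γ ^ 2 / (1 - γ) < 1)
    ↔ β ^ M < (1 - γ) ^ 2 * (1 - β) / (γ ^ 2 * (3 + β) + 1 - β) := by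
  obtain ⟨hγ0, hγ1⟩ := hγ
  obtain ⟨hβ0, hβ1⟩ := hβ
  have hx1 : β ^ M < 1 := pow_lt_one₀ hβ0.le hβ1 hM.ne'
  have h1x : 0 < 1 - β ^ M := by linarith
  have h1γ : 0 < 1 - γ := by linarith
  have hD : 0 < γ ^ 2 * (3 + β) + 1 - β := by nlinarith [sq_nonneg γ]
  set x := β ^ M with hxdef
  have key : 1 - (((β + γ * (1 - β) / (1 - x)
        + γ * (((1 + γ) / (1 - γ) - β) * (x / (1 - x))))
      + 2 * (x / (1 - x)) * γ ^ 2 / (1 - γ)))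
      = ((1 - γ) ^ 2 * (1 - β) - x * (γ ^ 2 * (3 + β) + 1 - β))
        / ((1 - x) * (1 - γ)) := by
    field_simp
    ring
  rw [← sub_pos, key, lt_div_iff₀ (mul_pos h1x h1γ), zero_mul,
    lt_div_iff₀ hD, sub_pos]
end

section
/- Let γ ∈ (0,1) and β ∈ (0,1). If M > log((1-γ)²(1-β)/(γ²(3+β)+1-β)) / log β, then β^M < (1-γ)²(1-β)/(γ²(3+β)+1-β), and consequently d₁ + d₂ < 1 where c₁ = β^M/(1-β^M), c₂ = ((1+γ)/(1-γ) - β)c₁, d₁ = β + γ(1-β)/(1-β^M) + γc₂, and d₂ = 2c₁γ²/(1-γ). -/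
/-- If `M` exceeds the logarithmic threshold, then `β^M` is below the explicit
threshold and the convergence condition `d₁ + d₂ < 1` holds. -/
theorem memory_size_sufficient (γ β : ℝ) (hγ : 0 < γ ∧ γ < 1) (hβ : 0 < β ∧ β < 1)
    (M : ℕ) (hM : 0 < M)
    (h : (M : ℝ) > Real.log ((1 - γ) ^ 2 * (1 - β) / (γ ^ 2 * (3 + β) + 1 - β))
          / Real.log β) :
    β ^ M < (1 - γ) ^ 2 * (1 - β) / (γ ^ 2 * (3 + β) + 1 - β) ∧
    (β + γ * (1 - β) / (1 - β ^ M)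
        + γ * (((1 + γ) / (1 - γ) - β) * (β ^ M / (1 - β ^ M))))
      + 2 * (β ^ M / (1 - β ^ M)) * γ ^ 2 / (1 - γ) < 1 := by
  obtain ⟨hγ0, hγ1⟩ := hγ
  obtain ⟨hβ0, hβ1⟩ := hβ
  have h1γ : 0 < 1 - γ := by linarith
  have h1β : 0 < 1 - β := by linarith
  have hD : 0 < γ ^ 2 * (3 + β) + 1 - β := by nlinarith
  have hT : 0 < (1 - γ) ^ 2 * (1 - β) / (γ ^ 2 * (3 + β) + 1 - β) := by
    exact div_pos (mul_pos (pow_pos h1γ 2) h1β) hD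
  have hlogβ : Real.log β < 0 := Real.log_neg hβ0 hβ1
  have hmul : (M : ℝ) * Real.log β <
      Real.log ((1 - γ) ^ 2 * (1 - β) / (γ ^ 2 * (3 + β) + 1 - β)) :=
    (div_lt_iff_of_neg hlogβ).mp h
  have hpow : 0 < β ^ M := pow_pos hβ0 M
  have h1 : β ^ M < (1 - γ) ^ 2 * (1 - β) / (γ ^ 2 * (3 + β) + 1 - β) := by
    have := (Real.log_lt_log_iff hpow hT).mp (by rwa [Real.log_pow])
    exact this
  refine ⟨h1, ?_⟩
  have hx1 : β ^ M < 1 := pow_lt_one₀ hβ0.le hβ1 hM.ne'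
  have h1x : 0 < 1 - β ^ M := by linarith
  have hkey : β ^ M * (γ ^ 2 * (3 + β) + 1 - β) < (1 - γ) ^ 2 * (1 - β) :=
    (lt_div_iff₀ hD).mp h1
  have e : (β + γ * (1 - β) / (1 - β ^ M)
        + γ * (((1 + γ) / (1 - γ) - β) * (β ^ M / (1 - β ^ M))))
      + 2 * (β ^ M / (1 - β ^ M)) * γ ^ 2 / (1 - γ)
      = (β * (1 - β ^ M) * (1 - γ) + γ * (1 - β) * (1 - γ)
        + γ * ((1 + γ) - β * (1 - γ)) * β ^ M + 2 * β ^ M * γ ^ 2)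
        / ((1 - β ^ M) * (1 - γ)) := by
    field_simp
  rw [e, div_lt_one (by positivity)]
  nlinarith [mul_pos hpow hγ0, mul_pos h1x h1γ, sq_nonneg γ, sq_nonneg (β ^ M)]
end

section
/- Let d₁, d₂ > 0 with d₁ + d₂ < 1 and d₁ < 1, and let M be a positive integer. Define a real sequence (y_k)_{k ≥ -M} by y_k = y₀ > 0 for all -M ≤ k ≤ 0, and y_{k+1} = d₁ y_k + d₂ y_{k-M} for k ≥ 0. Then (y_k)_{k ≥ 0} is nonincreasing, y_1 < y_0, and for every positive integer a, y_{a(M+1)} ≤ (d₁ + d₂)^a y₀; in particular y_k → 0 as k → ∞. -/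
open Filter

/-- The delayed linear recursion `y_{k+1} = d₁ y_k + d₂ y_{k-M}` with constant
initial data is nonincreasing, strictly decreases at the first step, decays
geometrically along the subsequence `a(M+1)`, and converges to `0`. -/
theorem delayed_recursion_decay (d₁ d₂ : ℝ) (hd₁ : 0 < d₁) (hd₂ : 0 < d₂)
    (hsum : d₁ + d₂ < 1) (hd₁lt : d₁ < 1)
    (M : ℕ) (hM : 0 < M) (y : ℤ → ℝ) (y₀ : ℝ) (hy₀ : 0 < y₀)
    (hinit : ∀ k : ℤ, -(M : ℤ) ≤ k → k ≤ 0 → y k = y₀)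
    (hrec : ∀ k : ℤ, 0 ≤ k → y (k + 1) = d₁ * y k + d₂ * y (k - M)) :
    (∀ k : ℤ, 0 ≤ k → y (k + 1) ≤ y k) ∧
    y 1 < y 0 ∧
    (∀ a : ℕ, 0 < a → y ((a : ℤ) * (M + 1)) ≤ (d₁ + d₂) ^ a * y₀) ∧
    Tendsto (fun k : ℕ => y k) atTop (nhds 0) := by
  have h1d₁ : 0 < 1 - d₁ := by linarith
  set c : ℝ := d₂ / (1 - d₁) with hc
  have hc_pos : 0 < c := div_pos hd₂ h1d₁
  have hcM : c * (1 - d₁) = d₂ := div_mul_cancel₀ d₂ h1d₁.ne'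
  have hc1 : c < 1 := (div_lt_one h1d₁).mpr (by linarith)
  -- positivity
  have hposn : ∀ n : ℕ, 0 < y ((n : ℤ) - M) := by
    intro n
    induction n using Nat.strong_induction_on with
    | _ n ih =>
      rcases le_or_gt n M with hn | hn
      · rw [hinit ((n : ℤ) - M) (by omega) (by omega)]; exact hy₀
      · have hr := hrec ((n : ℤ) - M - 1) (by omega)
        rw [show (n : ℤ) - M - 1 + 1 = (n : ℤ) - M from by ring] at hr
        have h1 := ih (n - 1) (by omega)
        have h2 := ih (n - 1 - M) (by omega)
        rw [show ((n - 1 : ℕ) : ℤ) - M = (n : ℤ) - M - 1 from by omega] at h1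
        rw [show ((n - 1 - M : ℕ) : ℤ) - M = (n : ℤ) - M - 1 - M from by omega] at h2
        rw [hr]
        have := mul_pos hd₁ h1
        have := mul_pos hd₂ h2
        linarith
  -- key combined induction: A (nonincreasing step) and B (c * y(k-M) ≤ y k)
  have key : ∀ n : ℕ, y ((n : ℤ) - M + 1) ≤ y ((n : ℤ) - M) ∧
      (M ≤ n → c * y ((n : ℤ) - M - M) ≤ y ((n : ℤ) - M)) := by
    intro n
    induction n using Nat.strong_induction_on with
    | _ n ih =>
      rcases lt_or_ge n M with hnM | hnM
      · constructor
        · rw [hinit ((n : ℤ) - M + 1) (by omega) (by omega),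
            hinit ((n : ℤ) - M) (by omega) (by omega)]
        · intro h; omega
      · have hB : c * y ((n : ℤ) - M - M) ≤ y ((n : ℤ) - M) := by
          rcases eq_or_lt_of_le hnM with h | h
          · rw [hinit ((n : ℤ) - M - M) (by omega) (by omega),
              hinit ((n : ℤ) - M) (by omega) (by omega)]
            nlinarith
          · have hr := hrec ((n : ℤ) - M - 1) (by omega)
            rw [show (n : ℤ) - M - 1 + 1 = (n : ℤ) - M from by ring] at hr
            have hBp := (ih (n - 1) (by omega)).2 (by omega)
            have hAp := (ih (n - 1 - M) (by omega)).1
            rw [show ((n - 1 : ℕ) : ℤ) - M - M = (n : ℤ) - M - 1 - M from by omega,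
              show ((n - 1 : ℕ) : ℤ) - M = (n : ℤ) - M - 1 from by omega] at hBp
            rw [show ((n - 1 - M : ℕ) : ℤ) - M + 1 = (n : ℤ) - M - M from by omega,
              show ((n - 1 - M : ℕ) : ℤ) - M = (n : ℤ) - M - 1 - M from by omega] at hAp
            rw [hr]
            have h2 := mul_le_mul_of_nonneg_left hBp hd₁.le
            calc c * y ((n : ℤ) - M - M) ≤ c * y ((n : ℤ) - M - 1 - M) :=
                  mul_le_mul_of_nonneg_left hAp hc_pos.le
              _ = d₁ * (c * y ((n : ℤ) - M - 1 - M)) + d₂ * y ((n : ℤ) - M - 1 - M) := by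
                  rw [← hcM]; ring
              _ ≤ d₁ * y ((n : ℤ) - M - 1) + d₂ * y ((n : ℤ) - M - 1 - M) := by linarith
        refine ⟨?_, fun _ => hB⟩
        have hr := hrec ((n : ℤ) - M) (by omega)
        rw [hr]
        have h2 := mul_le_mul_of_nonneg_left hB h1d₁.le
        rw [← mul_assoc, mul_comm (1 - d₁) c, hcM] at h2
        linarith
  -- single-step monotonicity for all k ≥ -M
  have mono1 : ∀ k : ℤ, -(M : ℤ) ≤ k → y (k + 1) ≤ y k := by
    intro k hk
    have := (key (k + M).toNat).1
    rwa [show ((k + M).toNat : ℤ) - M = k from by omega] at this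
  -- monotonicity
  have monoD : ∀ d : ℕ, ∀ m : ℤ, -(M : ℤ) ≤ m → y (m + d) ≤ y m := by
    intro d
    induction d with
    | zero => intro m _; simp
    | succ d ih =>
      intro m hm
      have h1 := mono1 (m + d) (by omega)
      have h2 := ih m hm
      rw [show m + ((d + 1 : ℕ) : ℤ) = m + d + 1 from by push_cast; ring]
      exact h1.trans h2
  have mono : ∀ m n : ℤ, -(M : ℤ) ≤ m → m ≤ n → y n ≤ y m := by
    intro m n hm hmn
    have := monoD (n - m).toNat m hm
    rwa [show m + ((n - m).toNat : ℤ) = n from by omega] at this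
  -- geometric step
  have step : ∀ k : ℤ, 0 ≤ k → y (k + ((M : ℤ) + 1)) ≤ (d₁ + d₂) * y k := by
    intro k hk
    have hr := hrec (k + M) (by omega)
    rw [show k + (M : ℤ) + 1 = k + ((M : ℤ) + 1) from by ring,
      show k + (M : ℤ) - M = k from by ring] at hr
    have h1 : y (k + M) ≤ y k := mono k (k + M) (by omega) (by omega)
    rw [hr]
    nlinarith [mul_le_mul_of_nonneg_left h1 hd₁.le]
  -- geometric decay
  have geom : ∀ a : ℕ, y ((a : ℤ) * (M + 1)) ≤ (d₁ + d₂) ^ a * y₀ := by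
    intro a
    induction a with
    | zero => simp [hinit 0 (by omega) le_rfl]
    | succ a ih =>
      have hs := step ((a : ℤ) * (M + 1)) (by positivity)
      rw [show (a : ℤ) * (M + 1) + ((M : ℤ) + 1) = ((a + 1 : ℕ) : ℤ) * (M + 1) from by
        push_cast; ring] at hs
      calc y (((a + 1 : ℕ) : ℤ) * (M + 1)) ≤ (d₁ + d₂) * y ((a : ℤ) * (M + 1)) := hs
        _ ≤ (d₁ + d₂) * ((d₁ + d₂) ^ a * y₀) :=
            mul_le_mul_of_nonneg_left ih (by linarith)
        _ = (d₁ + d₂) ^ (a + 1) * y₀ := by ring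
  have ypos : ∀ k : ℕ, 0 < y k := by
    intro k
    have := hposn (k + M)
    rwa [show ((k + M : ℕ) : ℤ) - M = (k : ℤ) from by omega] at this
  refine ⟨fun k hk => mono1 k (by omega), ?_, fun a _ => geom a, ?_⟩
  · have hr := hrec 0 le_rfl
    rw [hinit 0 (by omega) le_rfl, hinit ((0 : ℤ) - M) (by omega) (by omega)] at hr
    rw [show ((0 : ℤ) + 1) = 1 from by ring] at hr
    rw [hr, hinit 0 (by omega) le_rfl]
    nlinarith
  · have hdiv : Tendsto (fun k : ℕ => k / (M + 1)) atTop atTop := by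
      refine tendsto_atTop_atTop.mpr fun b => ⟨b * (M + 1), fun k hk => ?_⟩
      exact (Nat.le_div_iff_mul_le (Nat.succ_pos M)).mpr hk
    have hpow : Tendsto (fun k : ℕ => (d₁ + d₂) ^ (k / (M + 1))) atTop (nhds 0) :=
      (tendsto_pow_atTop_nhds_zero_of_lt_one (by linarith) hsum).comp hdiv
    have hup : Tendsto (fun k : ℕ => (d₁ + d₂) ^ (k / (M + 1)) * y₀) atTop (nhds 0) := by
      have := hpow.mul_const y₀
      rwa [zero_mul] at this
    refine tendsto_of_tendsto_of_tendsto_of_le_of_le tendsto_const_nhds hup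
      (fun k => (ypos k).le) (fun k => ?_)
    have h1 : y ((k : ℤ)) ≤ y (((k / (M + 1) : ℕ) : ℤ) * (M + 1)) := by
      apply mono _ _ (le_trans (by omega : -(M : ℤ) ≤ 0) (by positivity))
      have := Nat.div_mul_le_self k (M + 1)
      push_cast
      exact_mod_cast this
    exact h1.trans (geom _)
end

section
/- Let d₁, d₂ > 0 with d₁ + d₂ < 1 and d₁ < 1, let M be a positive integer, and let (y_k)_{k ≥ -M} be the nonincreasing sequence defined by y_k = y₀ > 0 for -M ≤ k ≤ 0 and y_{k+1} = d₁ y_k + d₂ y_{k-M} for k ≥ 0. Define d₃ = d₁^M + d₂ (1 - d₁^M)/(1 - d₁). Then y_k ≥ d₃ y_{k-M} for all k ≥ M, and consequently y_{k+1} ≤ (d₁ + d₂ d₃⁻¹) y_k for all k ≥ 0, so y_k ≤ (d₁ + d₂/d₃)^k y₀. -/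
/-- Sharper geometric rate for the delayed linear recursion via the constant
`d₃ = d₁^M + d₂(1-d₁^M)/(1-d₁)`. -/
theorem delayed_recursion_rate (d₁ d₂ : ℝ) (hd₁ : 0 < d₁) (hd₂ : 0 < d₂)
    (hsum : d₁ + d₂ < 1) (hd₁lt : d₁ < 1)
    (M : ℕ) (hM : 0 < M) (y : ℤ → ℝ) (y₀ : ℝ) (hy₀ : 0 < y₀)
    (hinit : ∀ k : ℤ, -(M : ℤ) ≤ k → k ≤ 0 → y k = y₀)
    (hrec : ∀ k : ℤ, 0 ≤ k → y (k + 1) = d₁ * y k + d₂ * y (k - M)) :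
    (∀ k : ℤ, (M : ℤ) ≤ k →
      (d₁ ^ M + d₂ * (1 - d₁ ^ M) / (1 - d₁)) * y (k - M) ≤ y k) ∧
    (∀ k : ℤ, 0 ≤ k →
      y (k + 1) ≤ (d₁ + d₂ / (d₁ ^ M + d₂ * (1 - d₁ ^ M) / (1 - d₁))) * y k) ∧
    (∀ k : ℕ,
      y k ≤ (d₁ + d₂ / (d₁ ^ M + d₂ * (1 - d₁ ^ M) / (1 - d₁))) ^ k * y₀) := by
  have h1d : (0:ℝ) < 1 - d₁ := by linarith
  set f : ℕ → ℝ := fun m => d₁ ^ m + d₂ * (1 - d₁ ^ m) / (1 - d₁) with hf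
  -- one-step monotonicity
  have hstep : ∀ n : ℕ, y ((n : ℤ) - M + 1) ≤ y ((n : ℤ) - M) := by
    intro n
    induction n using Nat.strong_induction_on with
    | _ n ih =>
      rcases lt_or_ge n M with h | h
      · have h1 : y ((n:ℤ) - M) = y₀ := hinit _ (by omega) (by omega)
        have h2 : y ((n:ℤ) - M + 1) = y₀ := hinit _ (by omega) (by omega)
        rw [h1, h2]
      · rcases eq_or_lt_of_le h with h' | h'
        · have e0 : (n:ℤ) - M = 0 := by omega
          rw [e0]
          have := hrec 0 le_rfl
          have hm : y (0 - (M:ℤ)) = y₀ := hinit _ (by omega) (by omega)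
          have h0 : y 0 = y₀ := hinit 0 (by omega) le_rfl
          rw [hm, h0] at this
          rw [h0]
          nlinarith
        · -- n > M, j := n - M ≥ 1
          have hj1 : (1:ℤ) ≤ (n:ℤ) - M := by omega
          have e1 := hrec ((n:ℤ) - M) (by omega)
          have e2 := hrec ((n:ℤ) - M - 1) (by omega)
          have c2 : (n:ℤ) - M - 1 + 1 = (n:ℤ) - M := by ring
          rw [c2] at e2
          have ih1 := ih (n - 1) (by omega)
          have ih2 := ih (n - M - 1) (by omega)
          have c3 : ((n - 1 : ℕ) : ℤ) - M + 1 = (n:ℤ) - M := by omega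
          have c4 : ((n - 1 : ℕ) : ℤ) - M = (n:ℤ) - M - 1 := by omega
          rw [c3, c4] at ih1
          have c5 : ((n - M - 1 : ℕ) : ℤ) - M + 1 = (n:ℤ) - M - M := by omega
          have c6 : ((n - M - 1 : ℕ) : ℤ) - M = (n:ℤ) - M - 1 - M := by omega
          rw [c5, c6] at ih2
          rw [e1, e2]
          nlinarith
  have mono : ∀ a : ℤ, -(M:ℤ) ≤ a → ∀ b : ℤ, a ≤ b → y b ≤ y a := by
    intro a ha b hb
    refine Int.le_induction (motive := fun b _ => y b ≤ y a) le_rfl ?_ b hb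
    intro n hn ihn
    have hn' : -(M:ℤ) ≤ n := le_trans ha hn
    have h := hstep (n + M).toNat
    have c : ((n + M).toNat : ℤ) - M = n := by omega
    rw [c] at h
    exact h.trans ihn
  have pos : ∀ k : ℤ, -(M:ℤ) ≤ k → 0 < y k := by
    have posn : ∀ n : ℕ, 0 < y ((n:ℤ) - M) := by
      intro n
      induction n using Nat.strong_induction_on with
      | _ n ih =>
        rcases le_or_gt n M with h | h
        · have h1 : y ((n:ℤ) - M) = y₀ := hinit _ (by omega) (by omega)
          rw [h1]; exact hy₀
        · have e2 := hrec ((n:ℤ) - M - 1) (by omega)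
          have c2 : (n:ℤ) - M - 1 + 1 = (n:ℤ) - M := by ring
          rw [c2] at e2
          have ih1 := ih (n - 1) (by omega)
          have ih2 := ih (n - M - 1) (by omega)
          have c4 : ((n - 1 : ℕ) : ℤ) - M = (n:ℤ) - M - 1 := by omega
          have c6 : ((n - M - 1 : ℕ) : ℤ) - M = (n:ℤ) - M - 1 - M := by omega
          rw [c4] at ih1
          rw [c6] at ih2
          rw [e2]
          nlinarith
    intro k hk
    have := posn (k + M).toNat
    have c : ((k + M).toNat : ℤ) - M = k := by omega
    rwa [c] at this
  -- claim A: for m ≤ M, f m * y₀ ≤ y m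
  have claimA : ∀ m : ℕ, m ≤ M → f m * y₀ ≤ y (m : ℤ) := by
    intro m
    induction m with
    | zero =>
      intro _
      have h0 : y 0 = y₀ := hinit 0 (by omega) le_rfl
      simp only [hf, pow_zero]
      rw [show ((0:ℕ):ℤ) = 0 from rfl, h0]
      have : (1 : ℝ) + d₂ * (1 - 1) / (1 - d₁) = 1 := by field_simp; ring
      rw [this, one_mul]
    | succ m ihm =>
      intro hm1
      have ihm' := ihm (by omega)
      have e := hrec (m : ℤ) (by positivity)
      have hy0' : y ((m:ℤ) - M) = y₀ := hinit _ (by omega) (by omega)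
      rw [hy0'] at e
      have cast1 : ((m + 1 : ℕ) : ℤ) = (m : ℤ) + 1 := by push_cast; ring
      rw [cast1, e]
      have alg : f (m + 1) = d₁ * f m + d₂ := by
        simp only [hf]
        field_simp
        ring
      rw [alg]
      nlinarith [mul_le_mul_of_nonneg_left ihm' hd₁.le]
  -- claim B: unrolling for k ≥ M
  have claimB : ∀ m : ℕ, m ≤ M → ∀ k : ℤ, (M:ℤ) ≤ k →
      d₁ ^ m * y (k - m) + d₂ * (1 - d₁ ^ m) / (1 - d₁) * y (k - M) ≤ y k := by
    intro m
    induction m with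
    | zero =>
      intro _ k hk
      simp only [pow_zero, Nat.cast_zero, sub_zero, one_mul]
      have : d₂ * (1 - 1) / (1 - d₁) = 0 := by ring
      rw [this, zero_mul, add_zero]
    | succ m ihm =>
      intro hm1 k hk
      have ihm' := ihm (by omega) k hk
      have e := hrec (k - m - 1) (by omega)
      have c2 : k - (m:ℤ) - 1 + 1 = k - m := by ring
      rw [c2] at e
      have hmono : y (k - M) ≤ y (k - m - 1 - M) :=
        mono (k - m - 1 - M) (by omega) (k - M) (by omega)
      have pmul : d₁ ^ m * d₂ * y (k - M) ≤ d₁ ^ m * d₂ * y (k - m - 1 - M) :=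
        mul_le_mul_of_nonneg_left hmono (by positivity)
      have cast1 : ((m + 1 : ℕ) : ℤ) = (m : ℤ) + 1 := by push_cast; ring
      rw [cast1]
      have key : d₁ ^ (m+1) * y (k - ((m:ℤ) + 1)) + d₁ ^ m * d₂ * y (k - M)
          ≤ d₁ ^ m * y (k - m) := by
        calc d₁ ^ (m+1) * y (k - ((m:ℤ) + 1)) + d₁ ^ m * d₂ * y (k - M)
            ≤ d₁ ^ (m+1) * y (k - ((m:ℤ) + 1)) + d₁ ^ m * d₂ * y (k - m - 1 - M) := by
              linarith
          _ = d₁ ^ m * (d₁ * y (k - m - 1) + d₂ * y (k - m - 1 - M)) := by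
              rw [show k - ((m:ℤ) + 1) = k - m - 1 by ring]; ring
          _ = d₁ ^ m * y (k - m) := by rw [← e]
      have gid : d₂ * (1 - d₁ ^ (m+1)) / (1 - d₁)
          = d₁ ^ m * d₂ + d₂ * (1 - d₁ ^ m) / (1 - d₁) := by
        field_simp
        ring
      rw [gid, add_mul]
      linarith
  have hd3pos : 0 < f M := by
    have hp1 : d₁ ^ M ≤ 1 := pow_le_one₀ hd₁.le hd₁lt.le
    have : 0 ≤ d₂ * (1 - d₁ ^ M) / (1 - d₁) := by
      apply div_nonneg _ h1d.le
      exact mul_nonneg hd₂.le (by linarith)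
    have : 0 < d₁ ^ M := pow_pos hd₁ M
    simp only [hf]
    linarith [div_nonneg (mul_nonneg hd₂.le (by linarith : (0:ℝ) ≤ 1 - d₁ ^ M)) h1d.le]
  -- f is antitone
  have fstep : ∀ m : ℕ, f (m + 1) ≤ f m := by
    intro m
    have alg : f m - f (m + 1) = d₁ ^ m * (1 - d₁ - d₂) := by
      simp only [hf]
      field_simp
      ring
    nlinarith [pow_pos hd₁ m]
  have fanti : ∀ a b : ℕ, a ≤ b → f b ≤ f a := by
    intro a b hab
    exact antitone_nat_of_succ_le fstep hab
  -- the key inequality for all k ≥ 0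
  have hd3y : ∀ k : ℤ, 0 ≤ k → f M * y (k - M) ≤ y k := by
    intro k hk
    rcases le_or_gt (M : ℤ) k with h | h
    · have := claimB M le_rfl k h
      simp only [hf]
      linarith
    · -- 0 ≤ k < M
      have hy0' : y (k - M) = y₀ := hinit _ (by omega) (by omega)
      rw [hy0']
      have hkn : ((k.toNat : ℕ) : ℤ) = k := by omega
      have hA := claimA k.toNat (by omega)
      rw [hkn] at hA
      have hle : f M ≤ f k.toNat := fanti k.toNat M (by omega)
      nlinarith
  have part1 : ∀ k : ℤ, (M : ℤ) ≤ k →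
      (d₁ ^ M + d₂ * (1 - d₁ ^ M) / (1 - d₁)) * y (k - M) ≤ y k := by
    intro k hk
    exact hd3y k (by omega)
  have part2 : ∀ k : ℤ, 0 ≤ k →
      y (k + 1) ≤ (d₁ + d₂ / (d₁ ^ M + d₂ * (1 - d₁ ^ M) / (1 - d₁))) * y k := by
    intro k hk
    rw [hrec k hk]
    have h3 := hd3y k hk
    have h4 : d₂ * y (k - M) ≤ d₂ / f M * y k := by
      rw [div_mul_eq_mul_div, le_div_iff₀ hd3pos]
      nlinarith
    have : (d₁ + d₂ / f M) * y k = d₁ * y k + d₂ / f M * y k := by ring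
    simp only [hf] at this h4 ⊢
    linarith
  refine ⟨part1, part2, ?_⟩
  have hcpos : 0 < d₁ + d₂ / (d₁ ^ M + d₂ * (1 - d₁ ^ M) / (1 - d₁)) := by
    have : 0 < d₂ / f M := div_pos hd₂ hd3pos
    simp only [hf] at this
    linarith
  intro k
  induction k with
  | zero =>
    have h0 : y 0 = y₀ := hinit 0 (by omega) le_rfl
    simp only [Nat.cast_zero, pow_zero, one_mul]
    rw [h0]
  | succ k ihk =>
    have cast1 : ((k + 1 : ℕ) : ℤ) = (k : ℤ) + 1 := by push_cast; ring
    rw [cast1]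
    calc y ((k:ℤ) + 1) ≤ (d₁ + d₂ / (d₁ ^ M + d₂ * (1 - d₁ ^ M) / (1 - d₁))) * y k :=
          part2 k (by positivity)
      _ ≤ (d₁ + d₂ / (d₁ ^ M + d₂ * (1 - d₁ ^ M) / (1 - d₁))) *
          ((d₁ + d₂ / (d₁ ^ M + d₂ * (1 - d₁ ^ M) / (1 - d₁))) ^ k * y₀) :=
          mul_le_mul_of_nonneg_left ihk hcpos.le
      _ = (d₁ + d₂ / (d₁ ^ M + d₂ * (1 - d₁ ^ M) / (1 - d₁))) ^ (k + 1) * y₀ := by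
          ring
end

section
/- Let γ, β ∈ (0,1). With c₁(M) = β^M/(1-β^M), c₂(M) = ((1+γ)/(1-γ)-β)c₁(M), d₁(M) = β + γ(1-β)/(1-β^M) + γ c₂(M), d₂(M) = 2c₁(M)γ²/(1-γ), and d₃(M) = d₁(M)^M + d₂(M)(1-d₁(M)^M)/(1-d₁(M)), we have lim_{M→∞} (d₁(M) + d₂(M)/d₃(M)) = β + γ(1-β). -/
open Filter

/-- As the memory size `M` tends to infinity, the convergence rate
`d₁(M) + d₂(M)/d₃(M)` of weight-corrected finite-memory EPMD tends to the exact
EPMD rate `β + γ(1-β)`. -/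
theorem rate_tendsto_exact_rate (γ β : ℝ) (hγ : 0 < γ ∧ γ < 1) (hβ : 0 < β ∧ β < 1) :
    Tendsto (fun M : ℕ =>
      let c₁ := β ^ M / (1 - β ^ M)
      let c₂ := ((1 + γ) / (1 - γ) - β) * c₁
      let d₁ := β + γ * (1 - β) / (1 - β ^ M) + γ * c₂
      let d₂ := 2 * c₁ * γ ^ 2 / (1 - γ)
      let d₃ := d₁ ^ M + d₂ * (1 - d₁ ^ M) / (1 - d₁)
      d₁ + d₂ / d₃) atTop (nhds (β + γ * (1 - β))) := by
  obtain ⟨hγ0, hγ1⟩ := hγ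
  obtain ⟨hβ0, hβ1⟩ := hβ
  set C1 : ℕ → ℝ := fun M => β ^ M / (1 - β ^ M) with hC1def
  set K : ℝ := (1 + γ) / (1 - γ) - β with hKdef
  set D1 : ℕ → ℝ := fun M => β + γ * (1 - β) / (1 - β ^ M) + γ * (K * C1 M) with hD1def
  set D2 : ℕ → ℝ := fun M => 2 * C1 M * γ ^ 2 / (1 - γ) with hD2def
  set D3 : ℕ → ℝ := fun M => D1 M ^ M + D2 M * (1 - D1 M ^ M) / (1 - D1 M) with hD3def
  set r : ℝ := β + γ * (1 - β) with hrdef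
  have hγ1' : 0 < 1 - γ := by linarith
  have hβ1' : 0 < 1 - β := by linarith
  have hr0 : 0 < r := by nlinarith
  have hrβ : β < r := by nlinarith
  have hr1 : r < 1 := by nlinarith
  have hK : 0 < K := by
    have h1 : (1 : ℝ) < (1 + γ) / (1 - γ) := by
      rw [lt_div_iff₀ hγ1']; nlinarith
    rw [hKdef]; linarith
  set C : ℝ := 2 * γ ^ 2 / ((1 - γ) * (1 - β)) with hCdef
  -- basic limits
  have ht : Tendsto (fun M : ℕ => β ^ M) atTop (nhds 0) :=
    tendsto_pow_atTop_nhds_zero_of_lt_one hβ0.le hβ1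
  have h1mb : Tendsto (fun M : ℕ => 1 - β ^ M) atTop (nhds 1) := by
    simpa using tendsto_const_nhds.sub ht
  have hc1 : Tendsto C1 atTop (nhds 0) := by
    have h := ht.div h1mb one_ne_zero; rw [zero_div] at h; exact h
  have hD1lim : Tendsto D1 atTop (nhds r) := by
    have h2 : Tendsto (fun M : ℕ => γ * (1 - β) / (1 - β ^ M)) atTop
        (nhds (γ * (1 - β) / 1)) := tendsto_const_nhds.div h1mb one_ne_zero
    have h3 : Tendsto (fun M : ℕ => γ * (K * C1 M)) atTop (nhds (γ * (K * 0))) :=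
      tendsto_const_nhds.mul (tendsto_const_nhds.mul hc1)
    have := ((tendsto_const_nhds : Tendsto (fun _ : ℕ => β) atTop (nhds β)).add h2).add h3
    simpa [hrdef] using this
  -- the squeeze : D2 / D3 → 0
  have hbound : ∀ᶠ M : ℕ in atTop,
      0 ≤ D2 M / D3 M ∧ D2 M / D3 M ≤ (β / r) ^ M * C := by
    filter_upwards [eventually_ge_atTop 1,
      hD1lim.eventually (eventually_lt_nhds hr1)] with M hM1 hD1lt
    have hM0 : M ≠ 0 := by omega
    have hbM : 0 < β ^ M := pow_pos hβ0 M
    have hbM1 : β ^ M < 1 := pow_lt_one₀ hβ0.le hβ1 hM0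
    have h1mbp : 0 < 1 - β ^ M := by linarith
    have hc1nn : 0 ≤ C1 M := div_nonneg hbM.le h1mbp.le
    have hrleD1 : r ≤ D1 M := by
      have h4 : γ * (1 - β) ≤ γ * (1 - β) / (1 - β ^ M) := by
        rw [le_div_iff₀ h1mbp]; nlinarith
      have h5 : 0 ≤ γ * (K * C1 M) := by positivity
      simp only [hD1def, hrdef]
      calc β + γ * (1 - β) = β + γ * (1 - β) + 0 := by ring
        _ ≤ β + γ * (1 - β) / (1 - β ^ M) + γ * (K * C1 M) :=
            add_le_add ((add_le_add_iff_left β).mpr h4) h5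
    have hD1pos : 0 < D1 M := lt_of_lt_of_le hr0 hrleD1
    have hD2nn : 0 ≤ D2 M := by
      simp only [hD2def]
      apply div_nonneg _ hγ1'.le
      positivity
    have hpowle : D1 M ^ M ≤ 1 := pow_le_one₀ hD1pos.le hD1lt.le
    have hD1M : 0 < 1 - D1 M := by linarith
    have hD3ge : D1 M ^ M ≤ D3 M := by
      simp only [hD3def]
      have : 0 ≤ D2 M * (1 - D1 M ^ M) / (1 - D1 M) :=
        div_nonneg (mul_nonneg hD2nn (by linarith)) hD1M.le
      linarith
    have hD1Mpow : 0 < D1 M ^ M := pow_pos hD1pos M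
    have hD3pos : 0 < D3 M := lt_of_lt_of_le hD1Mpow hD3ge
    constructor
    · exact div_nonneg hD2nn hD3pos.le
    · have hrpow : 0 < r ^ M := pow_pos hr0 M
      have step1 : D2 M / D3 M ≤ D2 M / D1 M ^ M := by gcongr
      have step2 : D2 M / D1 M ^ M ≤ D2 M / r ^ M := by
        gcongr
      have hD2le : D2 M ≤ β ^ M * C := by
        have h1 : β ^ M ≤ β := by
          have := pow_le_pow_of_le_one hβ0.le hβ1.le hM1
          simpa using this
        have h2 : β ^ M / (1 - β ^ M) ≤ β ^ M / (1 - β) := by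
          gcongr
        calc D2 M = (β ^ M / (1 - β ^ M)) * (2 * γ ^ 2 / (1 - γ)) := by
              simp only [hD2def, hC1def]; ring
          _ ≤ (β ^ M / (1 - β)) * (2 * γ ^ 2 / (1 - γ)) := by
              gcongr
          _ = β ^ M * C := by
              rw [hCdef]; field_simp
      have step3 : D2 M / r ^ M ≤ (β / r) ^ M * C := by
        rw [div_pow]
        calc D2 M / r ^ M ≤ (β ^ M * C) / r ^ M := by gcongr
          _ = β ^ M / r ^ M * C := by ring
      exact le_trans step1 (le_trans step2 step3)
  have hRHS : Tendsto (fun M : ℕ => (β / r) ^ M * C) atTop (nhds 0) := by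
    have h0 : Tendsto (fun M : ℕ => (β / r) ^ M) atTop (nhds 0) :=
      tendsto_pow_atTop_nhds_zero_of_lt_one (div_nonneg hβ0.le hr0.le)
        ((div_lt_one hr0).mpr hrβ)
    simpa using h0.mul_const C
  have hsq : Tendsto (fun M : ℕ => D2 M / D3 M) atTop (nhds 0) := by
    apply tendsto_of_tendsto_of_tendsto_of_le_of_le' tendsto_const_nhds hRHS
    · exact hbound.mono fun M h => h.1
    · exact hbound.mono fun M h => h.2
  have final : Tendsto (fun M : ℕ => D1 M + D2 M / D3 M) atTop (nhds r) := by
    simpa using hD1lim.add hsq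
  exact final
end
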